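/- For the lowest-resource language, temperature-based sampling probability is monotone nondecreasing in τ: if N_a ≤ N_j for all j, then τ ↦ P_τ(a) = N_a^{1/τ}/Σ_j N_j^{1/τ} is monotone nondecreasing on (0,∞). -/
import Mathlib


theorem lowest_resource_prob_monotone
    {L : Type*} [Fintype L] [Nonempty L] (N : L → ℝ) (hN : ∀ j, 0 < N j)
    (a : L) (ha : ∀ j, N a ≤ N j) :
    MonotoneOn (fun τ : ℝ => N a ^ (1 / τ) / ∑ j : L, N j ^ (1 / τ))
      (Set.Ioi (0 : ℝ)) := by
  have hNa : 0 < N a := hN a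
  have key : ∀ t ∈ Set.Ioi (0:ℝ),
      N a ^ (1 / t) / ∑ j : L, N j ^ (1 / t)
        = 1 / ∑ j : L, (N j / N a) ^ (1 / t) := by
    intro t ht
    have hpow : (0:ℝ) < N a ^ (1 / t) := Real.rpow_pos_of_pos hNa _
    rw [show (∑ j : L, (N j / N a) ^ (1 / t))
          = (∑ j : L, N j ^ (1 / t)) / N a ^ (1 / t) by
        rw [Finset.sum_div]
        refine Finset.sum_congr rfl fun j _ => ?_
        rw [Real.div_rpow (hN j).le hNa.le]]
    rw [one_div_div]
  intro σ hσ τ hτ hστ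
  simp only
  rw [key σ hσ, key τ hτ]
  have hpos : (0:ℝ) < ∑ j : L, (N j / N a) ^ (1 / τ) := by
    apply Finset.sum_pos (fun j _ => Real.rpow_pos_of_pos (div_pos (hN j) hNa) _)
    exact Finset.univ_nonempty
  apply one_div_le_one_div_of_le hpos
  apply Finset.sum_le_sum
  intro j _
  have h1 : (1:ℝ) ≤ N j / N a := (one_le_div hNa).mpr (ha j)
  exact Real.rpow_le_rpow_of_exponent_le h1
    (one_div_le_one_div_of_le (Set.mem_Ioi.mp hσ) hστ)
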